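/- arXiv:2305.04080 — 7 statements merged into one kernel-verified Lean document; each statement's English description precedes it below -/
import Mathlib

section
/- If S ∈ ℝ^{d₁×d₂} satisfies the matrix CUR conditions, i.e., C = X(:,J), R = X(I,:), U = X(I,J), and rank(U) = rank(X), then X = C U⁺ R, where U⁺ denotes the Moore–Penrose pseudoinverse. -/
/-!
With `U = X(I,J)`, the chain `rank U ≤ rank X(I,:) ≤ rank X` collapses, so the rows of `X(I,:)` span
the row space of `X` and the columns of `U` span the column space of `X(I,:)`. Hence `X = A X(I,:)`
and `X(I,:) = U B`, so `X(:,J) = A U`; any `G` with `U G U = U`, in particular `U⁺`, then gives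
`X = A U B = A U G U B = X(:,J) G X(I,:)`.
-/

open Matrix

/-- `B` is the Moore–Penrose pseudoinverse of `A`. -/
def IsMoorePenroseInv {m n : Type*} [Fintype m] [Fintype n]
    (A : Matrix m n ℝ) (B : Matrix n m ℝ) : Prop :=
  A * B * A = A ∧ B * A * B = B ∧ (A * B)ᵀ = A * B ∧ (B * A)ᵀ = B * A

namespace Matrix

variable {K m n m₀ n₀ : Type*} [Field K] [Fintype m] [Fintype n] [Fintype m₀] [Fintype n₀]

theorem span_row_submatrix_eq_of_rank_eq (X : Matrix m n K) (r : m₀ → m)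
    (h : (X.submatrix r id).rank = X.rank) :
    Submodule.span K (Set.range (X.submatrix r id).row) = Submodule.span K (Set.range X.row) := by
  refine Submodule.eq_of_le_of_finrank_eq (Submodule.span_mono ?_) ?_
  · rintro _ ⟨i, rfl⟩
    exact ⟨r i, rfl⟩
  · rw [← rank_eq_finrank_span_row, ← rank_eq_finrank_span_row, h]

theorem exists_eq_mul_submatrix_rows_of_rank_eq (X : Matrix m n K) (r : m₀ → m)
    (h : (X.submatrix r id).rank = X.rank) : ∃ A : Matrix m m₀ K, X = A * X.submatrix r id := by
  have hrow : ∀ i, X i ∈ LinearMap.range (X.submatrix r id).vecMulLinear := fun i => by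
    rw [range_vecMulLinear, span_row_submatrix_eq_of_rank_eq X r h]
    exact Submodule.subset_span ⟨i, rfl⟩
  choose A hA using hrow
  exact ⟨of A, funext fun i => (hA i).symm⟩

theorem exists_eq_submatrix_cols_mul_of_rank_eq (X : Matrix m n K) (c : n₀ → n)
    (h : (X.submatrix id c).rank = X.rank) : ∃ B : Matrix n₀ n K, X = X.submatrix id c * B := by
  obtain ⟨A, hA⟩ := exists_eq_mul_submatrix_rows_of_rank_eq Xᵀ c (by
    rw [← transpose_submatrix, rank_transpose, rank_transpose, h])
  exact ⟨Aᵀ, by simpa only [transpose_transpose, transpose_mul, transpose_submatrix]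
    using congrArg transpose hA⟩

theorem eq_submatrix_mul_mul_submatrix_of_rank_eq (X : Matrix m n K) (r : m₀ → m) (c : n₀ → n)
    (h : (X.submatrix r c).rank = X.rank) {G : Matrix n₀ m₀ K}
    (hG : X.submatrix r c * G * X.submatrix r c = X.submatrix r c) :
    X = X.submatrix id c * G * X.submatrix r id := by
  set R := X.submatrix r id
  set U := X.submatrix r c
  have hRX : R.rank = X.rank :=
    le_antisymm (rank_submatrix_le X r id) (h ▸ rank_submatrix_le R id c)
  have hUR : U.rank = R.rank := h.trans hRX.symm
  obtain ⟨A, hXA⟩ := exists_eq_mul_submatrix_rows_of_rank_eq X r hRX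
  obtain ⟨B, hRB⟩ : ∃ B, R = U * B := exists_eq_submatrix_cols_mul_of_rank_eq R c hUR
  have hCA : X.submatrix id c = A * U := by
    conv_lhs => rw [hXA]
    exact submatrix_mul A R id id c Function.bijective_id
  calc X = A * (U * G * U * B) := by rw [hG, ← hRB, ← hXA]
    _ = A * U * G * (U * B) := by simp only [Matrix.mul_assoc]
    _ = X.submatrix id c * G * R := by rw [← hCA, ← hRB]

end Matrix

/-- Matrix CUR decomposition: if `U = X(I,J)` has the same rank as `X`, then
`X = C U⁺ R` where `C = X(:,J)` and `R = X(I,:)`. -/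
theorem matrix_CUR {d₁ d₂ : ℕ} (X : Matrix (Fin d₁) (Fin d₂) ℝ)
    (I : Finset (Fin d₁)) (J : Finset (Fin d₂))
    (C : Matrix (Fin d₁) {j // j ∈ J} ℝ)
    (R : Matrix {i // i ∈ I} (Fin d₂) ℝ)
    (U : Matrix {i // i ∈ I} {j // j ∈ J} ℝ)
    (hC : ∀ i j, C i j = X i j.1)
    (hR : ∀ i j, R i j = X i.1 j)
    (hU : ∀ i j, U i j = X i.1 j.1)
    (Up : Matrix {j // j ∈ J} {i // i ∈ I} ℝ)
    (hUp : IsMoorePenroseInv U Up)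
    (hrank : U.rank = X.rank) :
    X = C * Up * R := by
  obtain rfl : C = X.submatrix id (↑) := ext hC
  obtain rfl : R = X.submatrix (↑) id := ext hR
  obtain rfl : U = X.submatrix (↑) (↑) := ext hU
  exact eq_submatrix_mul_mul_submatrix_of_rank_eq X _ _ hrank hUp.1
end

section
/- For a matrix CUR decomposition, if X = C U⁺ R holds with C = X(:,J), R = X(I,:), U = X(I,J), then rank(C) = rank(R) = rank(U) = rank(X). -/
open Matrix

/-!
Write `C = X(:, c)`, `R = X(r, :)`, `U = X(r, c)`. Submatrices never have larger rank, so
`rank U ≤ rank C ≤ rank X` and `rank R ≤ rank X`; conversely `X = C W R` gives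
`rank X ≤ rank C, rank R`. Restricting `X = C W R` to the rows `r` gives `R = U W R`, hence
`X = C W U W R` and `rank X ≤ rank U`.
-/

namespace Matrix

variable {K : Type*} [CommSemiring K] {m n m₀ n₀ : Type*} [Fintype m₀] [Fintype n₀]

theorem rank_le_of_eq_mul_mul_of_mul_mul_eq [StrongRankCondition K] [Fintype n]
    {X : Matrix m n K} {C : Matrix m n₀ K} {W : Matrix n₀ m₀ K} {R : Matrix m₀ n K}
    {U : Matrix m₀ n₀ K} (hX : X = C * W * R) (hR : U * W * R = R) : X.rank ≤ U.rank := by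
  have hX' : X = C * W * U * (W * R) := by
    conv_lhs => rw [hX, ← hR]
    simp only [Matrix.mul_assoc]
  rw [hX']
  exact (rank_mul_le_left _ _).trans (rank_mul_le_right _ _)

theorem submatrix_rows_eq_mul_of_eq_mul_mul {X : Matrix m n K} (r : m₀ → m) (c : n₀ → n)
    {W : Matrix n₀ m₀ K} (hX : X = X.submatrix id c * W * X.submatrix r id) :
    X.submatrix r id = X.submatrix r c * W * X.submatrix r id := by
  conv_lhs => rw [hX]
  rw [submatrix_mul _ _ r id id Function.bijective_id, submatrix_mul _ _ r id id
    Function.bijective_id, submatrix_id_id, submatrix_id_id, submatrix_submatrix]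
  rfl

theorem rank_submatrix_eq_of_eq_mul_mul [StrongRankCondition K] [Fintype n] (X : Matrix m n K)
    (r : m₀ → m) (c : n₀ → n) (W : Matrix n₀ m₀ K)
    (hX : X = X.submatrix id c * W * X.submatrix r id) :
    (X.submatrix id c).rank = X.rank ∧ (X.submatrix r id).rank = X.rank ∧
      (X.submatrix r c).rank = X.rank := by
  have hR := submatrix_rows_eq_mul_of_eq_mul_mul r c hX
  have hXU : X.rank ≤ (X.submatrix r c).rank :=
    rank_le_of_eq_mul_mul_of_mul_mul_eq hX hR.symm
  have hXC : X.rank ≤ (X.submatrix id c).rank := by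
    conv_lhs => rw [hX]
    exact (rank_mul_le_left _ _).trans (rank_mul_le_left _ W)
  have hXR : X.rank ≤ (X.submatrix r id).rank := by
    conv_lhs => rw [hX]
    exact rank_mul_le_right _ _
  have hUC : (X.submatrix r c).rank ≤ (X.submatrix id c).rank :=
    rank_submatrix_le (X.submatrix id c) r id
  exact ⟨(rank_submatrix_le X id c).antisymm hXC, (rank_submatrix_le X r id).antisymm hXR,
    (hUC.trans (rank_submatrix_le X id c)).antisymm hXU⟩

end Matrix

theorem matrix_CUR_ranks_general {d₁ d₂ : ℕ} (X : Matrix (Fin d₁) (Fin d₂) ℝ)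
    (I : Finset (Fin d₁)) (J : Finset (Fin d₂))
    (C : Matrix (Fin d₁) {j // j ∈ J} ℝ)
    (R : Matrix {i // i ∈ I} (Fin d₂) ℝ)
    (U : Matrix {i // i ∈ I} {j // j ∈ J} ℝ)
    (hC : ∀ i j, C i j = X i j.1)
    (hR : ∀ i j, R i j = X i.1 j)
    (hU : ∀ i j, U i j = X i.1 j.1)
    (Up : Matrix {j // j ∈ J} {i // i ∈ I} ℝ)
    (hX : X = C * Up * R) :
    C.rank = X.rank ∧ R.rank = X.rank ∧ U.rank = X.rank := by
  obtain rfl : C = X.submatrix id Subtype.val := ext hC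
  obtain rfl : R = X.submatrix Subtype.val id := ext hR
  obtain rfl : U = X.submatrix Subtype.val Subtype.val := ext hU
  exact rank_submatrix_eq_of_eq_mul_mul X _ _ Up hX

/-- If the CUR decomposition `X = C U⁺ R` holds, then
`rank C = rank R = rank U = rank X`. -/
theorem matrix_CUR_ranks {d₁ d₂ : ℕ} (X : Matrix (Fin d₁) (Fin d₂) ℝ)
    (I : Finset (Fin d₁)) (J : Finset (Fin d₂))
    (C : Matrix (Fin d₁) {j // j ∈ J} ℝ)
    (R : Matrix {i // i ∈ I} (Fin d₂) ℝ)
    (U : Matrix {i // i ∈ I} {j // j ∈ J} ℝ)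
    (hC : ∀ i j, C i j = X i j.1)
    (hR : ∀ i j, R i j = X i.1 j)
    (hU : ∀ i j, U i j = X i.1 j.1)
    (Up : Matrix {j // j ∈ J} {i // i ∈ I} ℝ)
    (hUp : IsMoorePenroseInv U Up)
    (hX : X = C * Up * R) :
    C.rank = X.rank ∧ R.rank = X.rank ∧ U.rank = X.rank :=
  matrix_CUR_ranks_general X I J C R U hC hR hU Up hX
end

section
/- If α·d > 2n·log(d)/(log 4 − 1), then nd·(e/4)^{α d^{n-1}/2} ≤ n·d^{1 − n·d^{n-2}}, so a Bernoulli(α/2) random tensor S ∈ ℝ^{d×⋯×d} (n modes, n ≥ 2, d ≥ 2) is α-T-sparse with probability at least 1 − n·d^{1 − n d^{n-2}}. -/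
/-!
A slice of `S` counts `d^(n-1)` independent Bernoulli(α/2) entries, with mean `m = α d^(n-1) / 2`.
Markov's inequality applied to `2^X`, whose expectation is `(1 + α/2)^(d^(n-1)) ≤ e^m`, gives the
Chernoff bound `P(X ≥ 2m) ≤ (e/4)^m`. The hypothesis on `α d` makes `(e/4)^m ≤ d^(-n d^(n-2))`, and
a union bound over the `n d` slices finishes.
-/

open MeasureTheory ENNReal

/-- A tensor `S ∈ ℝ^{d × ⋯ × d}` with `n` modes (boolean-valued, marking
nonzero entries) is `α`-T-sparse if every slice along every mode has at most
`α d^{n-1}` nonzero entries. -/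
def TSparse (n d : ℕ) (α : ℝ) (S : (Fin n → Fin d) → Bool) : Prop :=
  ∀ (j : Fin n) (k : Fin d),
    ((Finset.univ.filter
      fun idx : Fin n → Fin d => idx j = k ∧ S idx = true).card : ℝ) ≤
      α * (d : ℝ) ^ (n - 1)

open Finset

theorem one_lt_log_four : 1 < Real.log 4 := by
  rw [Real.lt_log_iff_exp_lt (by norm_num)]
  linarith [Real.exp_one_lt_three]

theorem exp_one_div_four_rpow_le {n d : ℕ} {α : ℝ} (hn : 2 ≤ n) (hd : 0 < d)
    (hαd : 2 * n * Real.log d / (Real.log 4 - 1) < α * d) :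
    (Real.exp 1 / 4) ^ (α * (d : ℝ) ^ (n - 1) / 2) ≤ (d : ℝ) ^ (-(n * (d : ℝ) ^ (n - 2))) := by
  have hd' : (0 : ℝ) < d := by exact_mod_cast hd
  have hlog : Real.log (Real.exp 1 / 4) = -(Real.log 4 - 1) := by
    rw [Real.log_div (Real.exp_ne_zero 1) (by norm_num), Real.log_exp]; ring
  have hpow : (d : ℝ) ^ (n - 1) = d * d ^ (n - 2) := by
    rw [← pow_succ']; congr 1; omega
  have hkey : 2 * n * Real.log d < (Real.log 4 - 1) * (α * d) := by
    rw [div_lt_iff₀ (by linarith [one_lt_log_four])] at hαd; linarith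
  rw [Real.rpow_def_of_pos (by positivity), Real.rpow_def_of_pos hd', Real.exp_le_exp, hlog, hpow]
  nlinarith [mul_lt_mul_of_pos_right hkey (pow_pos hd' (n - 2))]

theorem nd_mul_exp_one_div_four_rpow_le {n d : ℕ} {α : ℝ} (hn : 2 ≤ n) (hd : 2 ≤ d)
    (hαd : 2 * n * Real.log d / (Real.log 4 - 1) < α * d) :
    (n : ℝ) * d * (Real.exp 1 / 4) ^ (α * (d : ℝ) ^ (n - 1) / 2) ≤
      (n : ℝ) * (d : ℝ) ^ ((1 : ℝ) - n * (d : ℝ) ^ (n - 2)) := by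
  have hd' : (0 : ℝ) < d := by positivity
  rw [sub_eq_add_neg, Real.rpow_add hd', Real.rpow_one, mul_assoc]
  gcongr
  exact exp_one_div_four_rpow_le hn (by omega) hαd

theorem lintegral_pi_prod_eq_prod_lintegral {ι α : Type*} [Fintype ι] [Fintype α]
    [MeasurableSpace α] [MeasurableSingletonClass α] (μ : ι → Measure α) [∀ i, SigmaFinite (μ i)]
    (f : ι → α → ℝ≥0∞) :
    ∫⁻ x, ∏ i, f i (x i) ∂Measure.pi μ = ∏ i, ∫⁻ a, f i a ∂μ i := by
  classical
  simp_rw [lintegral_fintype, ← Set.univ_pi_singleton, Measure.pi_pi, ← prod_mul_distrib]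
  rw [prod_univ_sum, Fintype.piFinset_univ]

section Bernoulli

variable (p : NNReal) (hp : p ≤ 1)

theorem lintegral_bernoulli (f : Bool → ℝ≥0∞) :
    ∫⁻ b, f b ∂(PMF.bernoulli p hp).toMeasure = f true * p + f false * (1 - p) := by
  simp [lintegral_fintype, PMF.bernoulli_apply]

variable {ι : Type*} [Fintype ι]

theorem lintegral_two_pow_card_filter_bernoulli (T : Finset ι) :
    ∫⁻ S, 2 ^ #{i ∈ T | S i = true} ∂Measure.pi (fun _ : ι => (PMF.bernoulli p hp).toMeasure) =
      (1 + (p : ℝ≥0∞)) ^ #T := by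
  classical
  have hprod (S : ι → Bool) :
      (2 : ℝ≥0∞) ^ #{i ∈ T | S i = true} = ∏ i, if i ∈ T then (if S i then 2 else 1) else 1 := by
    rw [prod_ite_mem, univ_inter, prod_ite, prod_const, prod_const_one, mul_one]
  have hfactor (i : ι) :
      ∫⁻ b, (if i ∈ T then (if b then 2 else 1) else 1) ∂(PMF.bernoulli p hp).toMeasure =
        if i ∈ T then 1 + (p : ℝ≥0∞) else 1 := by
    have hp' : (p : ℝ≥0∞) ≤ 1 := by exact_mod_cast hp
    by_cases hi : i ∈ T
    · simp only [hi, if_true, lintegral_bernoulli, Bool.false_eq_true, if_false, one_mul, two_mul]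
      rw [add_assoc, add_tsub_cancel_of_le hp', add_comm]
    · simp only [hi, if_false, lintegral_bernoulli, one_mul]
      rw [add_tsub_cancel_of_le hp']
  simp_rw [hprod]
  rw [lintegral_pi_prod_eq_prod_lintegral (fun _ => (PMF.bernoulli p hp).toMeasure)
    fun i b => if i ∈ T then (if b then (2 : ℝ≥0∞) else 1) else 1]
  simp_rw [hfactor]
  rw [prod_ite_mem, univ_inter, prod_const]

theorem measure_two_mul_mean_le_card_filter_le (T : Finset ι) :
    Measure.pi (fun _ : ι => (PMF.bernoulli p hp).toMeasure)
        {S | 2 * (p * #T) ≤ (#{i ∈ T | S i = true} : ℝ)} ≤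
      ENNReal.ofReal ((Real.exp 1 / 4) ^ (p * #T : ℝ)) := by
  have hthreshold {X : ℕ} (h : 2 * (p * #T) ≤ (X : ℝ)) :
      ENNReal.ofReal (4 ^ (p * #T : ℝ)) ≤ 2 ^ X := by
    rw [show (4 : ℝ) = 2 ^ (2 : ℝ) by norm_num, ← Real.rpow_mul (by norm_num), ← ofReal_ofNat 2,
      ← ofReal_pow (by norm_num), ← Real.rpow_natCast]
    exact ofReal_le_ofReal (Real.rpow_le_rpow_of_exponent_le (by norm_num) h)
  have hmgf : (1 + (p : ℝ≥0∞)) ^ #T ≤ ENNReal.ofReal (Real.exp (p * #T)) := by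
    rw [mul_comm, Real.exp_nat_mul, ofReal_pow (Real.exp_pos _).le]
    gcongr
    calc 1 + (p : ℝ≥0∞) = ENNReal.ofReal (p + 1) := by
          rw [ofReal_add p.coe_nonneg zero_le_one, ofReal_coe_nnreal, ofReal_one, add_comm]
      _ ≤ _ := ofReal_le_ofReal (Real.add_one_le_exp p)
  calc _ ≤ Measure.pi (fun _ : ι => (PMF.bernoulli p hp).toMeasure)
          {S | ENNReal.ofReal (4 ^ (p * #T : ℝ)) ≤ 2 ^ #{i ∈ T | S i = true}} :=
        measure_mono fun S hS => hthreshold hS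
    _ ≤ (1 + (p : ℝ≥0∞)) ^ #T / ENNReal.ofReal (4 ^ (p * #T : ℝ)) := by
        rw [← lintegral_two_pow_card_filter_bernoulli p hp T]
        exact meas_ge_le_lintegral_div (by fun_prop) (by positivity) ofReal_ne_top
    _ ≤ ENNReal.ofReal (Real.exp (p * #T)) / ENNReal.ofReal (4 ^ (p * #T : ℝ)) := by gcongr
    _ = ENNReal.ofReal ((Real.exp 1 / 4) ^ (p * #T : ℝ)) := by
        rw [← ofReal_div_of_pos (by positivity), Real.div_rpow (by positivity) (by norm_num),
          Real.exp_one_rpow]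

theorem measure_lt_card_slice_le {n d : ℕ} (j : Fin n) (k : Fin d) {t : ℝ}
    (ht : 2 * (p * (d : ℝ) ^ (n - 1)) ≤ t) :
    Measure.pi (fun _ : Fin n → Fin d => (PMF.bernoulli p hp).toMeasure)
        {S | t < (#{idx | idx j = k ∧ S idx = true} : ℝ)} ≤
      ENNReal.ofReal ((Real.exp 1 / 4) ^ (p * (d : ℝ) ^ (n - 1))) := by
  have hcard : #{idx : Fin n → Fin d | idx j = k} = d ^ (n - 1) := by
    simpa using Fintype.card_filter_piFinset_const_eq_of_mem univ j (mem_univ k)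
  have h := measure_two_mul_mean_le_card_filter_le p hp {idx : Fin n → Fin d | idx j = k}
  simp only [hcard, filter_filter, Nat.cast_pow] at h
  exact (measure_mono fun S hS => ht.trans hS.le).trans h

end Bernoulli

theorem measure_compl_TSparse_le {n d : ℕ} {α : ℝ} (μ : Measure ((Fin n → Fin d) → Bool))
    {q : ℝ≥0∞}
    (h : ∀ j k, μ {S | α * (d : ℝ) ^ (n - 1) < (#{idx | idx j = k ∧ S idx = true} : ℝ)} ≤ q) :
    μ {S | TSparse n d α S}ᶜ ≤ n * d * q := by
  have hcover : {S | TSparse n d α S}ᶜ = ⋃ j, ⋃ k,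
      {S | α * (d : ℝ) ^ (n - 1) < (#{idx | idx j = k ∧ S idx = true} : ℝ)} := by
    ext S; simp [TSparse]
  calc μ {S | TSparse n d α S}ᶜ
      ≤ ∑ j, ∑ k, μ {S | α * (d : ℝ) ^ (n - 1) < (#{idx | idx j = k ∧ S idx = true} : ℝ)} := by
        rw [hcover]
        exact (measure_iUnion_fintype_le μ _).trans
          (sum_le_sum fun j _ => measure_iUnion_fintype_le μ _)
    _ ≤ ∑ _j : Fin n, ∑ _k : Fin d, q := by gcongr with j _ k _; exact h j k
    _ = n * d * q := by simp [mul_assoc]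

/-- If `α d > 2n log d / (log 4 − 1)`, then
`nd (e/4)^{α d^{n-1}/2} ≤ n d^{1 − n d^{n-2}}`, so a Bernoulli(α/2) random
tensor `S ∈ ℝ^{d × ⋯ × d}` (`n ≥ 2` modes, `d ≥ 2`) is `α`-T-sparse with
probability at least `1 − n d^{1 − n d^{n-2}}`. -/
theorem TSparse_whp {n d : ℕ} (hn : 2 ≤ n) (hd : 2 ≤ d)
    (α : ℝ) (hα0 : 0 < α) (hα1 : α < 1)
    (hαd : 2 * n * Real.log d / (Real.log 4 - 1) < α * d)
    (μ : Measure ((Fin n → Fin d) → Bool))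
    (hμ : μ = Measure.pi fun _ : Fin n → Fin d =>
      (PMF.bernoulli (Real.toNNReal (α / 2))
        (by rw [Real.toNNReal_le_one]; linarith)).toMeasure) :
    (n : ℝ) * d * (Real.exp 1 / 4) ^ (α * (d : ℝ) ^ (n - 1) / 2) ≤
        (n : ℝ) * (d : ℝ) ^ ((1 : ℝ) - n * (d : ℝ) ^ (n - 2)) ∧
      1 - ENNReal.ofReal ((n : ℝ) * (d : ℝ) ^ ((1 : ℝ) - n * (d : ℝ) ^ (n - 2)))
          ≤ μ {S | TSparse n d α S} := by
  have hbound := nd_mul_exp_one_div_four_rpow_le hn hd hαd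
  refine ⟨hbound, ?_⟩
  have hp : ((α / 2).toNNReal : ℝ) = α / 2 := Real.coe_toNNReal _ (by positivity)
  have hcompl : μ {S | TSparse n d α S}ᶜ ≤
      n * d * ENNReal.ofReal ((Real.exp 1 / 4) ^ (α * (d : ℝ) ^ (n - 1) / 2)) := by
    subst hμ
    refine measure_compl_TSparse_le _ fun j k => (measure_lt_card_slice_le _ _ j k ?_).trans_eq ?_
    · rw [hp]; linarith
    · rw [hp, div_mul_eq_mul_div]
  rw [← ofReal_natCast, ← ofReal_natCast, ← ofReal_mul (by positivity),
    ← ofReal_mul (by positivity)] at hcompl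
  have : IsProbabilityMeasure μ := by subst hμ; infer_instance
  rw [tsub_le_iff_right]
  calc 1 = μ Set.univ := measure_univ.symm
    _ ≤ μ {S | TSparse n d α S} + μ {S | TSparse n d α S}ᶜ := measure_univ_le_add_compl _
    _ ≤ _ := by gcongr; exact hcompl.trans (ofReal_le_ofReal hbound)
end

section
/- Hard thresholding accurately captures outlier supports: let X = L* + S*, and apply soft support estimation via hard thresholding: S = HT_ζ(X − L) with threshold ζ = ‖L* − L‖_∞. Then supp(S) ⊆ supp(S*) and ‖S* − S‖_∞ ≤ 2‖L* − L‖_∞. -/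
/-- Entrywise hard thresholding with threshold `ζ`. -/
noncomputable def HT {ι : Type*} (ζ : ℝ) (T : ι → ℝ) : ι → ℝ :=
  fun i => if ζ < |T i| then T i else 0

/-- Hard thresholding accurately captures outlier supports: if `X = L⋆ + S⋆`
and `S = HT_ζ(X − L)` with `ζ = ‖L⋆ − L‖_∞`, then `supp S ⊆ supp S⋆` and
`‖S⋆ − S‖_∞ ≤ 2 ‖L⋆ − L‖_∞`. -/
theorem hard_thresholding_support {ι : Type*} [Fintype ι]
    (Lstar Sstar L X : ι → ℝ) (hX : X = Lstar + Sstar)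
    (ζ : ℝ) (hζ : ζ = ⨆ i, |Lstar i - L i|)
    (S : ι → ℝ) (hS : S = HT ζ (X - L)) :
    Function.support S ⊆ Function.support Sstar ∧
      (⨆ i, |Sstar i - S i|) ≤ 2 * (⨆ i, |Lstar i - L i|) := by
  rcases isEmpty_or_nonempty ι with h | h
  · constructor
    · intro i; exact absurd trivial (h.elim i)
    · simp [Real.iSup_of_isEmpty]
  · have hb : BddAbove (Set.range fun i => |Lstar i - L i|) :=
      (Set.finite_range _).bddAbove
    have hle : ∀ i, |Lstar i - L i| ≤ ζ := fun i => hζ ▸ le_ciSup hb i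
    have hζ0 : 0 ≤ ζ := le_trans (abs_nonneg _) (hle (Classical.arbitrary ι))
    constructor
    · intro i hi
      simp only [Function.mem_support] at hi ⊢
      intro hs0
      apply hi
      rw [hS]
      unfold HT
      have : ¬ ζ < |(X - L) i| := by
        simp only [Pi.sub_apply, hX, Pi.add_apply, hs0, add_zero, not_lt]
        exact hle i
      simp only [Pi.sub_apply] at this
      simp [this]
    · rw [← hζ]
      apply ciSup_le
      intro i
      rw [hS]
      unfold HT
      by_cases hc : ζ < |(X - L) i|
      · rw [if_pos hc]
        have : Sstar i - (X - L) i = L i - Lstar i := by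
          simp only [hX, Pi.sub_apply, Pi.add_apply]; ring
        rw [this, abs_sub_comm]
        linarith [hle i]
      · rw [if_neg hc]
        have : Sstar i - 0 = (X - L) i - (Lstar i - L i) := by
          simp only [hX, Pi.sub_apply, Pi.add_apply]; ring
        rw [this]
        calc |(X - L) i - (Lstar i - L i)| ≤ |(X - L) i| + |Lstar i - L i| :=
              abs_sub _ _
          _ ≤ ζ + ζ := add_le_add (not_lt.mp hc) (hle i)
          _ = 2 * ζ := by ring
end

section
/- Tensor CUR reconstruction (one direction of Theorem 3.3): let A ∈ ℝ^{d₁×⋯×dₙ} admit an exact Tucker decomposition with core of size (r₁,…,rₙ); let Iᵢ ⊆ [dᵢ], Jᵢ ⊆ [Π_{j≠i}d_j], R = A(I₁,…,Iₙ), Cᵢ = A_(i)(:,Jᵢ), Uᵢ = Cᵢ(Iᵢ,:). If rank(Uᵢ) = rᵢ for every i, then A = R ×₁ (C₁U₁⁺) ×₂ ⋯ ×ₙ (CₙUₙ⁺). -/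
open Matrix

universe u

/-- Mode-`k` unfolding of an `n`-mode tensor. -/
def unfold {n : ℕ} {κ : Fin n → Type u} (k : Fin n)
    (X : (∀ i, κ i) → ℝ) :
    Matrix (κ k) (∀ i : {j : Fin n // j ≠ k}, κ i.1) ℝ :=
  fun a t => X fun i =>
    if h : i = k then cast (congrArg κ h).symm a else t ⟨i, h⟩

/-!
When `rank Uᵢ = rank A_(i)`, the columns `Cᵢ` span the column space of `A_(i)` and the rows
`A_(i)(Iᵢ,:)` span its row space, so `Cᵢ = Y Uᵢ` and `A_(i)(Iᵢ,:) = Uᵢ X`, whence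
`Cᵢ Uᵢ⁺ A_(i)(Iᵢ,:) = Y Uᵢ Uᵢ⁺ Uᵢ X = Cᵢ X = A_(i)`. In tensor language: restricting `A` to `Iᵢ`
in mode `i` and multiplying back by `CᵢUᵢ⁺` in that mode returns `A`. Doing this in every mode
(induction on the number of modes) gives `A = R ×₁ C₁U₁⁺ ⋯ ×ₙ CₙUₙ⁺`.
-/

namespace Matrix

variable {K : Type*} [Field K] {m n m' n' : Type*}

theorem exists_submatrix_mul_eq_of_rank_le [Fintype n] [Fintype n'] (M : Matrix m n K)
    (g : n' → n) (h : M.rank ≤ (M.submatrix id g).rank) :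
    ∃ X : Matrix n' n K, M.submatrix id g * X = M := by
  classical
  have hle : LinearMap.range (M.submatrix id g).mulVecLin ≤ LinearMap.range M.mulVecLin := by
    simp only [range_mulVecLin]
    exact Submodule.span_mono (Set.range_comp_subset_range g M.col)
  have hrange := Submodule.eq_of_le_of_finrank_le hle h
  have hcol (t : n) : M.col t ∈ LinearMap.range (M.submatrix id g).mulVecLin :=
    hrange ▸ ⟨Pi.single t 1, M.mulVec_single_one t⟩
  choose v hv using hcol
  exact ⟨(of v)ᵀ, by ext i t; exact congrFun (hv t) i⟩

theorem submatrix_mul_mul_submatrix_eq_of_rank_eq [Fintype m] [Fintype n] [Fintype m']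
    [Fintype n'] (M : Matrix m n K) (f : m' → m) (g : n' → n) (X : Matrix n' m' K)
    (hX : M.submatrix f g * X * M.submatrix f g = M.submatrix f g)
    (hrank : (M.submatrix f g).rank = M.rank) :
    M.submatrix id g * X * M.submatrix f id = M := by
  have hrank_col : M.rank ≤ (M.submatrix id g).rank := by
    have := (M.submatrix id g).rank_submatrix_le f id
    rwa [submatrix_submatrix, Function.comp_id, Function.id_comp, hrank] at this
  obtain ⟨Xc, hXc⟩ := M.exists_submatrix_mul_eq_of_rank_le g hrank_col
  have hrank_row : Mᵀ.rank ≤ (Mᵀ.submatrix id f).rank := by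
    have := (M.submatrix f id).rank_submatrix_le id g
    rw [submatrix_submatrix, Function.comp_id, Function.id_comp, hrank] at this
    rwa [rank_transpose, ← transpose_submatrix, rank_transpose]
  obtain ⟨Xr, hXr⟩ := Mᵀ.exists_submatrix_mul_eq_of_rank_le f hrank_row
  replace hXr : Xrᵀ * M.submatrix f id = M := by
    have := congrArg transpose hXr
    rwa [transpose_mul, transpose_submatrix, transpose_transpose] at this
  have hcol : M.submatrix id g = Xrᵀ * M.submatrix f g := by
    conv_lhs => rw [← hXr]
    rw [submatrix_mul _ _ id id g Function.bijective_id, submatrix_id_id, submatrix_submatrix]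
    rfl
  have hrow : M.submatrix f id = M.submatrix f g * Xc := by
    conv_lhs => rw [← hXc]
    rw [submatrix_mul _ _ f id id Function.bijective_id, submatrix_id_id, submatrix_submatrix]
    rfl
  calc M.submatrix id g * X * M.submatrix f id
      = Xrᵀ * (M.submatrix f g * X * M.submatrix f g) * Xc := by
        rw [hcol, hrow]; simp only [Matrix.mul_assoc]
    _ = M := by rw [hX, Matrix.mul_assoc, ← hrow, hXr]

end Matrix

section MultiMode

variable {R : Type*} [CommSemiring R]

/-- `multiModeProduct G K` is `G ×₁ K₁ ×₂ ⋯ ×ₙ Kₙ`. -/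
def multiModeProduct {n : ℕ} {κ μ : Fin n → Type*} [∀ i, Fintype (μ i)]
    (G : (∀ i, μ i) → R) (K : ∀ i, Matrix (κ i) (μ i) R) (x : ∀ i, κ i) : R :=
  ∑ s, G s * ∏ i, K i (x i) (s i)

/-- `hA k` says that `A` is the mode-`k` product of its restriction along `e k` in mode `k`
with `K k`. -/
theorem eq_multiModeProduct_of_forall_mode {n : ℕ} {κ μ : Fin n → Type*}
    [∀ i, Fintype (μ i)] (A : (∀ i, κ i) → R) (e : ∀ i, μ i → κ i)
    (K : ∀ i, Matrix (κ i) (μ i) R)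
    (hA : ∀ k y, A y = ∑ b, K k (y k) b * A (Function.update y k (e k b))) :
    A = multiModeProduct (fun s => A fun i => e i (s i)) K := by
  induction n with
  | zero =>
    funext x
    simp only [multiModeProduct, Finset.univ_unique, Finset.sum_singleton, Finset.univ_eq_empty,
      Finset.prod_empty, mul_one]
    exact congrArg A (Subsingleton.elim _ _)
  | succ n ih =>
    funext x
    have hslice (c : κ 0) := ih (fun t => A (Fin.cons c t)) (fun i => e i.succ)
      (fun i => K i.succ) fun k t => by
        simpa only [Fin.cons_succ, Fin.cons_update] using hA k.succ (Fin.cons c t)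
    have hcons (b : μ 0) (s : ∀ i : Fin n, μ i.succ) :
        (fun i => e i (Fin.cons b s i)) = Fin.cons (e 0 b) fun i => e i.succ (s i) := by
      funext i
      cases i using Fin.cases <;> rfl
    calc A x = ∑ b, K 0 (x 0) b * A (Fin.cons (e 0 b) (Fin.tail x)) := by
          have hupdate (c : κ 0) : Function.update x 0 c = Fin.cons c (Fin.tail x) := by
            rw [← Fin.update_cons_zero (x 0), Fin.cons_self_tail]
          rw [hA 0 x]
          simp only [hupdate]
      _ = ∑ b, ∑ s : ∀ i : Fin n, μ i.succ, K 0 (x 0) b *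
            (A (Fin.cons (e 0 b) fun i => e i.succ (s i)) * ∏ i, K i.succ (x i.succ) (s i)) := by
          refine Finset.sum_congr rfl fun b _ => ?_
          rw [congrFun (hslice (e 0 b)) (Fin.tail x), multiModeProduct, Finset.mul_sum]
          rfl
      _ = multiModeProduct (fun s => A fun i => e i (s i)) K x := by
          rw [multiModeProduct, ← (Fin.consEquiv μ).sum_comp, Fintype.sum_prod_type]
          refine Finset.sum_congr rfl fun b _ => Finset.sum_congr rfl fun s _ => ?_
          simp only [Fin.consEquiv_apply, hcons, Fin.prod_univ_succ, Fin.cons_zero, Fin.cons_succ]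
          ring

end MultiMode

section Unfolding

variable {n : ℕ} {κ : Fin n → Type u}

theorem unfold_apply_update (k : Fin n) (X : (∀ i, κ i) → ℝ) (y : ∀ i, κ i) (b : κ k) :
    unfold k X b (fun i => y i.1) = X (Function.update y k b) := by
  refine congrArg X (funext fun i => ?_)
  by_cases h : i = k
  · subst h; simp
  · simp [h]

theorem eq_multiModeProduct_of_unfold_eq_mul {μ : Fin n → Type*} [∀ i, Fintype (μ i)]
    (X : (∀ i, κ i) → ℝ) (e : ∀ i, μ i → κ i) (P : ∀ i, Matrix (κ i) (μ i) ℝ)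
    (hX : ∀ k, unfold k X = P k * (unfold k X).submatrix (e k) id) :
    X = multiModeProduct (fun s => X fun i => e i (s i)) P := by
  refine eq_multiModeProduct_of_forall_mode X e P fun k y => ?_
  have hentry := congrFun (congrFun (hX k) (y k)) fun i => y i.1
  simpa only [unfold_apply_update, Function.update_eq_self, mul_apply, submatrix_apply,
    id] using hentry

end Unfolding

/-- Tensor CUR reconstruction: if `A` has Tucker rank `(r₁, …, rₙ)` and
`rank Uᵢ = rᵢ` for every `i`, then `A = R ×₁ (C₁U₁⁺) ×₂ ⋯ ×ₙ (CₙUₙ⁺)`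
(written entrywise). -/
theorem tensor_CUR {n : ℕ} (d r : Fin n → ℕ)
    (A : (∀ i, Fin (d i)) → ℝ)
    (hTucker : ∀ i, (unfold i A).rank = r i)
    (I : ∀ i, Finset (Fin (d i)))
    (J : ∀ i, Finset (∀ j : {j : Fin n // j ≠ i}, Fin (d j.1)))
    (R : (∀ i, {x // x ∈ I i}) → ℝ)
    (hR : ∀ idx, R idx = A fun i => (idx i).1)
    (C : ∀ i, Matrix (Fin (d i)) {x // x ∈ J i} ℝ)
    (hC : ∀ i a j, C i a j = unfold i A a j.1)
    (U : ∀ i, Matrix {x // x ∈ I i} {x // x ∈ J i} ℝ)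
    (hU : ∀ i a j, U i a j = C i a.1 j)
    (Up : ∀ i, Matrix {x // x ∈ J i} {x // x ∈ I i} ℝ)
    (hUp : ∀ i, IsMoorePenroseInv (U i) (Up i))
    (hrankU : ∀ i, (U i).rank = r i) :
    ∀ idx, A idx =
      ∑ s : ∀ i, {x // x ∈ I i}, R s * ∏ i, (C i * Up i) (idx i) (s i) := by
  have hmode (i : Fin n) :
      unfold i A = (C i * Up i) * (unfold i A).submatrix Subtype.val id := by
    have hCi : C i = (unfold i A).submatrix id Subtype.val := Matrix.ext (hC i)
    have hUi : U i = (unfold i A).submatrix Subtype.val Subtype.val :=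
      Matrix.ext fun a j => (hU i a j).trans (hC i a.1 j)
    rw [hCi]
    exact ((unfold i A).submatrix_mul_mul_submatrix_eq_of_rank_eq _ _ (Up i)
      (hUi ▸ (hUp i).1) (hUi ▸ (hrankU i).trans (hTucker i).symm)).symm
  have hA := eq_multiModeProduct_of_unfold_eq_mul A (fun i => Subtype.val) _ hmode
  rw [← funext hR] at hA
  exact congrFun hA
end

section
/- In the tensor CUR setting, if A = R ×ᵢ₌₁ⁿ (CᵢUᵢ⁺) holds with R, Cᵢ, Uᵢ as submatrices/subtensors of A and A has Tucker rank (r₁,…,rₙ), then rank(Cᵢ) = rᵢ for all i and the Tucker rank of R is (r₁,…,rₙ). -/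
open Matrix

universe u

/-!
Unfolding the multilinear product `A = R ×ᵢ Mᵢ` along mode `k` gives the matrix factorization
`A₍ₖ₎ = M_k R₍ₖ₎ (⊗_{j ≠ k} M_j)ᵀ`. With `M_k = C_k U_k⁺` this bounds `rank A₍ₖ₎` by both
`rank C_k` and `rank R₍ₖ₎`, while conversely `C_k` and `R₍ₖ₎` are submatrices of `A₍ₖ₎`.
-/

namespace Equiv

variable {α : Type*} [DecidableEq α] (i : α) (β : α → Type*) (a : β i)
  (t : ∀ j : {j // j ≠ i}, β j)

theorem piSplitAt_symm_apply_self : (piSplitAt i β).symm (a, t) i = a := by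
  simp [piSplitAt_symm_apply]

theorem piSplitAt_symm_apply_of_ne (j : {j // j ≠ i}) : (piSplitAt i β).symm (a, t) j = t j := by
  simp [piSplitAt_symm_apply, j.2]

end Equiv

section Unfold

variable {n : ℕ} {κ μ : Fin n → Type u}

theorem unfold_apply (k : Fin n) (X : (∀ i, κ i) → ℝ) (a : κ k)
    (t : ∀ i : {j : Fin n // j ≠ k}, κ i.1) :
    unfold k X a t = X ((Equiv.piSplitAt k κ).symm (a, t)) := by
  refine congrArg X ((Equiv.piSplitAt k κ).symm_apply_eq.mpr ?_).symm
  ext j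
  · simp
  · simp [j.2]

theorem unfold_comp_map (X : (∀ i, κ i) → ℝ) (f : ∀ i, μ i → κ i) (k : Fin n) :
    unfold k (fun s => X fun i => f i (s i)) =
      (unfold k X).submatrix (f k) (fun t j => f j (t j)) := by
  ext a t
  simp only [unfold_apply, submatrix_apply]
  congr 1
  funext i
  by_cases h : i = k
  · subst h
    simp
  · simp [h]

/-- The multilinear (Tucker) product `X ×₁ M₁ ×₂ ⋯ ×ₙ Mₙ`. -/
def tuckerProduct [∀ i, Fintype (μ i)] (X : (∀ i, μ i) → ℝ) (M : ∀ i, Matrix (κ i) (μ i) ℝ) :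
    (∀ i, κ i) → ℝ :=
  fun idx => ∑ s, X s * ∏ i, M i (idx i) (s i)

def kroneckerExcept (k : Fin n) (M : ∀ i, Matrix (κ i) (μ i) ℝ) :
    Matrix (∀ j : {j : Fin n // j ≠ k}, κ j.1) (∀ j : {j : Fin n // j ≠ k}, μ j.1) ℝ :=
  fun t s => ∏ j, M j.1 (t j) (s j)

variable [∀ i, Fintype (μ i)] (X : (∀ i, μ i) → ℝ) (M : ∀ i, Matrix (κ i) (μ i) ℝ) (k : Fin n)

theorem unfold_tuckerProduct :
    unfold k (tuckerProduct X M) = M k * unfold k X * (kroneckerExcept k M)ᵀ := by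
  ext a t
  simp only [unfold_apply, tuckerProduct, mul_apply, transpose_apply, kroneckerExcept,
    Finset.sum_mul]
  rw [← (Equiv.piSplitAt k μ).symm.sum_comp, Fintype.sum_prod_type]
  refine Finset.sum_comm.trans (Finset.sum_congr rfl fun s _ => Finset.sum_congr rfl fun b _ => ?_)
  rw [Fintype.prod_eq_mul_prod_subtype_ne _ k]
  simp only [Equiv.piSplitAt_symm_apply_self, Equiv.piSplitAt_symm_apply_of_ne]
  ring

variable [∀ i, Fintype (κ i)]

theorem rank_unfold_tuckerProduct_le_rank_factor :
    (unfold k (tuckerProduct X M)).rank ≤ (M k).rank := by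
  rw [unfold_tuckerProduct]
  exact (rank_mul_le_left _ _).trans (rank_mul_le_left _ _)

theorem rank_unfold_tuckerProduct_le_rank_unfold :
    (unfold k (tuckerProduct X M)).rank ≤ (unfold k X).rank := by
  rw [unfold_tuckerProduct]
  exact (rank_mul_le_left _ _).trans (rank_mul_le_right _ _)

end Unfold

theorem tensor_CUR_ranks_general {n : ℕ} (d r : Fin n → ℕ)
    (A : (∀ i, Fin (d i)) → ℝ)
    (hTucker : ∀ i, (unfold i A).rank = r i)
    (I : ∀ i, Finset (Fin (d i)))
    (J : ∀ i, Finset (∀ j : {j : Fin n // j ≠ i}, Fin (d j.1)))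
    (R : (∀ i, {x // x ∈ I i}) → ℝ)
    (hR : ∀ idx, R idx = A fun i => (idx i).1)
    (C : ∀ i, Matrix (Fin (d i)) {x // x ∈ J i} ℝ)
    (hC : ∀ i a j, C i a j = unfold i A a j.1)
    (Up : ∀ i, Matrix {x // x ∈ J i} {x // x ∈ I i} ℝ)
    (hA : ∀ idx, A idx =
      ∑ s : ∀ i, {x // x ∈ I i}, R s * ∏ i, (C i * Up i) (idx i) (s i)) :
    (∀ i, (C i).rank = r i) ∧ (∀ i, (unfold i R).rank = r i) := by
  have hA : A = tuckerProduct R fun i => C i * Up i := funext hA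
  have hC_sub (i) : C i = (unfold i A).submatrix id Subtype.val := Matrix.ext (hC i)
  have hR_sub (i) : unfold i R = (unfold i A).submatrix Subtype.val fun t j => (t j).1 := by
    rw [show R = fun s => A fun j => (s j).1 from funext hR]
    exact unfold_comp_map A (fun _ => Subtype.val) i
  refine ⟨fun i => le_antisymm ?_ ?_, fun i => le_antisymm ?_ ?_⟩
  · rw [← hTucker i, hC_sub i]
    exact rank_submatrix_le _ _ _
  · rw [← hTucker i, hA]
    exact (rank_unfold_tuckerProduct_le_rank_factor R _ i).trans (rank_mul_le_left _ _)
  · rw [← hTucker i, hR_sub i]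
    exact rank_submatrix_le _ _ _
  · rw [← hTucker i, hA]
    exact rank_unfold_tuckerProduct_le_rank_unfold R _ i

/-- If the tensor CUR identity `A = R ×ᵢ₌₁ⁿ (CᵢUᵢ⁺)` holds (entrywise) and `A`
has Tucker rank `(r₁, …, rₙ)`, then `rank Cᵢ = rᵢ` for all `i` and the Tucker
rank of `R` is `(r₁, …, rₙ)`. -/
theorem tensor_CUR_ranks {n : ℕ} (d r : Fin n → ℕ)
    (A : (∀ i, Fin (d i)) → ℝ)
    (hTucker : ∀ i, (unfold i A).rank = r i)
    (I : ∀ i, Finset (Fin (d i)))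
    (J : ∀ i, Finset (∀ j : {j : Fin n // j ≠ i}, Fin (d j.1)))
    (R : (∀ i, {x // x ∈ I i}) → ℝ)
    (hR : ∀ idx, R idx = A fun i => (idx i).1)
    (C : ∀ i, Matrix (Fin (d i)) {x // x ∈ J i} ℝ)
    (hC : ∀ i a j, C i a j = unfold i A a j.1)
    (U : ∀ i, Matrix {x // x ∈ I i} {x // x ∈ J i} ℝ)
    (hU : ∀ i a j, U i a j = C i a.1 j)
    (Up : ∀ i, Matrix {x // x ∈ J i} {x // x ∈ I i} ℝ)
    (hUp : ∀ i, IsMoorePenroseInv (U i) (Up i))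
    (hA : ∀ idx, A idx =
      ∑ s : ∀ i, {x // x ∈ I i}, R s * ∏ i, (C i * Up i) (idx i) (s i)) :
    (∀ i, (C i).rank = r i) ∧ (∀ i, (unfold i R).rank = r i) :=
  tensor_CUR_ranks_general d r A hTucker I J R hR C hC Up hA
end

section
/- Pseudoinverse factorization through a full-rank intersection: if X ∈ ℝ^{d₁×d₂}, C = X(:,J), R = X(I,:), U = X(I,J) with rank(U) = rank(X) = r, then X = C U⁺ R implies R = U U⁺ R and C = C U⁺ U, i.e., the rows of R lie in the row space of U and the columns of C lie in the column space of U. -/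
open Matrix

lemma CUR_aux {n₁ n₂ : ℕ} (Y : Matrix (Fin n₁) (Fin n₂) ℝ)
    (I : Finset (Fin n₁)) (J : Finset (Fin n₂))
    (R : Matrix {i // i ∈ I} (Fin n₂) ℝ)
    (U : Matrix {i // i ∈ I} {j // j ∈ J} ℝ)
    (hR : ∀ i j, R i j = Y i.1 j)
    (hU : ∀ i j, U i j = Y i.1 j.1)
    (Up : Matrix {j // j ∈ J} {i // i ∈ I} ℝ)
    (hUp : U * Up * U = U)
    (hrank : Y.rank ≤ U.rank) : R = U * Up * R := by
  -- range U ≤ range R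
  have hUR : LinearMap.range U.mulVecLin ≤ LinearMap.range R.mulVecLin := by
    rintro x ⟨v, rfl⟩
    refine ⟨fun k => if h : k ∈ J then v ⟨k, h⟩ else 0, ?_⟩
    funext i
    simp only [mulVecLin_apply, mulVec, dotProduct]
    rw [show (∑ k : Fin n₂, R i k * if h : k ∈ J then v ⟨k, h⟩ else 0)
        = ∑ k ∈ J, R i k * if h : k ∈ J then v ⟨k, h⟩ else 0 from
      (Finset.sum_subset (Finset.subset_univ _) (by intro k _ hk; simp [hk])).symm]
    rw [← Finset.sum_attach J]
    refine Finset.sum_congr rfl fun k _ => ?_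
    simp [hU, hR, k.2]
  -- R.mulVecLin factors through Y.mulVecLin
  have hRY : R.mulVecLin =
      (LinearMap.funLeft ℝ ℝ (Subtype.val : {i // i ∈ I} → Fin n₁)).comp Y.mulVecLin := by
    apply LinearMap.ext; intro v
    funext i
    simp [mulVecLin_apply, mulVec, dotProduct, hR]
  have hrankR : R.rank ≤ Y.rank := by
    rw [Matrix.rank, Matrix.rank, hRY, LinearMap.range_comp]
    exact Submodule.finrank_map_le _ _
  have hrankU : U.rank ≤ R.rank := by
    rw [Matrix.rank, Matrix.rank]
    exact Submodule.finrank_mono hUR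
  have heq : LinearMap.range U.mulVecLin = LinearMap.range R.mulVecLin := by
    apply Submodule.eq_of_le_of_finrank_le hUR
    exact le_trans hrankR hrank
  -- conclude entrywise, column by column
  funext i j
  have hcol : (fun k => R k j) ∈ LinearMap.range U.mulVecLin := by
    rw [heq]
    exact ⟨Pi.single j 1, by funext k; simp [mulVecLin_apply, mulVec, dotProduct,
      Pi.single_apply, mul_ite]⟩
  obtain ⟨w, hw⟩ := hcol
  have : (U * Up).mulVec (fun k => R k j) = fun k => R k j := by
    rw [← hw]
    simp only [mulVecLin_apply] at hw ⊢
    rw [mulVec_mulVec, hUp]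
  have h2 : (U * Up).mulVec (fun k => R k j) i = R i j := congrFun this i
  rw [← h2]
  simp [Matrix.mul_apply, mulVec, dotProduct]

/-- Pseudoinverse factorization through a full-rank intersection:
if `rank U = rank X = r` and `X = C U⁺ R`, then `R = U U⁺ R` and `C = C U⁺ U`. -/
theorem CUR_factorization {d₁ d₂ r : ℕ} (X : Matrix (Fin d₁) (Fin d₂) ℝ)
    (I : Finset (Fin d₁)) (J : Finset (Fin d₂))
    (C : Matrix (Fin d₁) {j // j ∈ J} ℝ)
    (R : Matrix {i // i ∈ I} (Fin d₂) ℝ)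
    (U : Matrix {i // i ∈ I} {j // j ∈ J} ℝ)
    (hC : ∀ i j, C i j = X i j.1)
    (hR : ∀ i j, R i j = X i.1 j)
    (hU : ∀ i j, U i j = X i.1 j.1)
    (Up : Matrix {j // j ∈ J} {i // i ∈ I} ℝ)
    (hUp : IsMoorePenroseInv U Up)
    (hrankU : U.rank = r) (hrankX : X.rank = r)
    (hX : X = C * Up * R) :
    R = U * Up * R ∧ C = C * Up * U := by
  obtain ⟨h1, h2, h3, h4⟩ := hUp
  constructor
  · exact CUR_aux X I J R U hR hU Up h1 (by rw [hrankU, hrankX])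
  · have hT : Cᵀ = Uᵀ * Upᵀ * Cᵀ := by
      apply CUR_aux Xᵀ J I Cᵀ Uᵀ
        (fun j i => by simp [transpose_apply, hC])
        (fun j i => by simp [transpose_apply, hU])
        Upᵀ
        (by have := congrArg transpose h1; rwa [transpose_mul, transpose_mul, ← Matrix.mul_assoc] at this)
        (by rw [rank_transpose, rank_transpose, hrankU, hrankX])
    have := congrArg transpose hT
    rwa [transpose_transpose, transpose_mul, transpose_mul, transpose_transpose,
      transpose_transpose, transpose_transpose, ← Matrix.mul_assoc] at this
end
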